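/- For every T ≥ 0 and every k with -T ≤ k ≤ T, the central trinomial coefficient dominates: C₂(T,k) ≤ C₂(T,0). -/
import Mathlib

noncomputable def C2 (T : ℕ) (k : ℤ) : ℕ :=
  if (T : ℤ) + k < 0 then 0
  else ((1 + Polynomial.X + Polynomial.X ^ 2 : Polynomial ℕ) ^ T).coeff ((T : ℤ) + k).toNat

namespace CentralTrinomialAux

open Polynomial

noncomputable def p : ℕ[X] := 1 + X + X ^ 2

noncomputable def a (T i : ℕ) : ℕ := ((p : ℕ[X]) ^ T).coeff i

lemma p_natDegree_le : (p : ℕ[X]).natDegree ≤ 2 := by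
  unfold p
  apply le_trans (natDegree_add_le _ _)
  simp [natDegree_add_le, le_trans (natDegree_add_le _ _)]

lemma reflect_p : reflect 2 (p : ℕ[X]) = p := by
  unfold p
  ext i
  rw [coeff_reflect]
  rcases le_or_gt i 2 with h | h
  · rw [revAt_le h]
    interval_cases i <;> simp [coeff_one, coeff_X, coeff_X_pow]
  · rw [revAt_eq_self_of_lt h]

lemma reflect_pow (T : ℕ) : reflect (2 * T) ((p : ℕ[X]) ^ T) = p ^ T := by
  induction T with
  | zero => simp
  | succ n ih =>
    have h1 : ((p : ℕ[X]) ^ n).natDegree ≤ 2 * n := by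
      calc ((p : ℕ[X]) ^ n).natDegree ≤ n * p.natDegree := natDegree_pow_le
        _ ≤ n * 2 := Nat.mul_le_mul_left n p_natDegree_le
        _ = 2 * n := Nat.mul_comm n 2
    have : reflect (2 * n + 2) ((p : ℕ[X]) ^ n * p) = reflect (2 * n) (p ^ n) * reflect 2 p :=
      reflect_mul _ _ h1 p_natDegree_le
    rw [pow_succ]
    rw [show 2 * (n + 1) = 2 * n + 2 by ring, this, ih, reflect_p]

lemma a_symm (T i j : ℕ) (h : i + j = 2 * T) : a T i = a T j := by
  have := congrArg (fun q => Polynomial.coeff q i) (reflect_pow T)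
  simp only [coeff_reflect] at this
  rw [a, a, ← this]
  congr 1
  rw [revAt_le (by omega)]
  omega

lemma coeff_succ (T n : ℕ) :
    a (T + 1) n = a T n + (if 1 ≤ n then a T (n - 1) else 0)
      + (if 2 ≤ n then a T (n - 2) else 0) := by
  unfold a
  rw [pow_succ]
  have hp : (p : ℕ[X]) ^ T * p = p ^ T * 1 + p ^ T * X ^ 1 + p ^ T * X ^ 2 := by
    unfold p; ring
  rw [hp, coeff_add, coeff_add, mul_one, coeff_mul_X_pow', coeff_mul_X_pow']

lemma a_step : ∀ T m, m < T → a T m ≤ a T (m + 1) := by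
  intro T
  induction T with
  | zero => intro m h; omega
  | succ n ih =>
    intro m hm
    rw [coeff_succ, coeff_succ]
    rcases Nat.lt_or_ge m 2 with h2 | h2
    · interval_cases m <;> simp
    · have e1 : (1:ℕ) ≤ m := by omega
      have e2 : (1:ℕ) ≤ m + 1 := by omega
      have e3 : (2:ℕ) ≤ m + 1 := by omega
      simp only [if_pos e1, if_pos h2, if_pos e2, if_pos e3]
      have key : a n (m - 2) ≤ a n (m + 1) := by
        rcases Nat.lt_or_ge m n with hlt | hge
        · have c1 : a n (m - 2) ≤ a n (m - 1) := by
            have := ih (m - 2) (by omega)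
            rwa [show m - 2 + 1 = m - 1 by omega] at this
          have c2 : a n (m - 1) ≤ a n m := by
            have := ih (m - 1) (by omega)
            rwa [show m - 1 + 1 = m by omega] at this
          exact le_trans c1 (le_trans c2 (ih m hlt))
        · have hmn : m = n := by omega
          subst hmn
          have hs : a m (m + 1) = a m (m - 1) := a_symm m _ _ (by omega)
          rw [hs]
          have := ih (m - 2) (by omega)
          rwa [show m - 2 + 1 = m - 1 by omega] at this
      have : m + 1 - 1 = m := by omega
      rw [this, show m + 1 - 2 = m - 1 by omega]
      omega

lemma a_mono (T : ℕ) (i j : ℕ) (hij : i ≤ j) (hjT : j ≤ T) : a T i ≤ a T j := by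
  induction j, hij using Nat.le_induction with
  | base => exact le_rfl
  | succ m hm ihm => exact le_trans (ihm (by omega)) (a_step T m (by omega))

end CentralTrinomialAux

theorem central_trinomial_max (T : ℕ) (k : ℤ) (hk : -(T : ℤ) ≤ k) (hk' : k ≤ (T : ℤ)) :
    C2 T k ≤ C2 T 0 := by
  have h0 : ¬ ((T : ℤ) + k < 0) := by omega
  have h0' : ¬ ((T : ℤ) + 0 < 0) := by omega
  rw [C2, C2, if_neg h0, if_neg h0']
  have hT0 : (((T : ℤ) + 0).toNat) = T := by omega
  rw [hT0]
  set n := ((T : ℤ) + k).toNat with hn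
  have hn2 : n ≤ 2 * T := by omega
  show CentralTrinomialAux.a T n ≤ CentralTrinomialAux.a T T
  rcases Nat.le_total n T with h | h
  · exact CentralTrinomialAux.a_mono T n T h le_rfl
  · rw [CentralTrinomialAux.a_symm T n (2 * T - n) (by omega)]
    exact CentralTrinomialAux.a_mono T (2 * T - n) T (by omega) le_rfl
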